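/- Let S be a finite nonempty type with |S| = K, let γ ∈ [0,1), let N ≥ 1, let δ' ∈ (0,1), and let T_1,…,T_N : Ω → (ℕ → S) be independent, identically distributed measurable random trajectories on a probability space Ω. Define the empirical discounted occupancy d_D(s)(ω) = (1/N)·Σ_{i=1}^N Σ_{t≥0} γ^t·1[T_i(ω)(t) = s] and the expected discounted occupancy d(s) = Σ_{t≥0} γ^t·P(T_1(t) = s). Then with probability at least 1 - δ', Σ_{s∈S} |d(s) - d_D(s)| ≤ (1/(1-γ))·√( (3K + 4·log(1/δ')) / (2N) ). -/

import Mathlib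

/-!
Each trajectory contributes a nonnegative occupancy vector of total mass `1 / (1 - γ)`, and `d` is
the mean of these vectors. Since the expected and the empirical occupancy have the same total mass,
their L1 distance is twice `∑ s ∈ A, (d s - dD s)` for the set `A` where `d` exceeds `dD`. For a
fixed `A` this is the deviation of an average of `N` independent variables with values in
`[0, 1 / (1 - γ)]`, so Hoeffding's inequality bounds the probability that it exceeds half the
radius by `exp (-(3K + 4 log (1 / δ')) / 4)`. A union bound over the `2 ^ K` subsets together with
`2 ≤ exp (3 / 4)` leaves a failure probability of at most `δ'`.
-/

open MeasureTheory ProbabilityTheory Real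

lemma measurableSet_apply_eq {S Ω : Type*} [MeasurableSpace S] [MeasurableSingletonClass S]
    [MeasurableSpace Ω] {X : Ω → ℕ → S} (hX : Measurable X) (t : ℕ) (s : S) :
    MeasurableSet {ω | X ω t = s} :=
  ((measurable_pi_apply t).comp hX) (measurableSet_singleton s)

section Occupancy

variable {S : Type*} [DecidableEq S] {γ : ℝ}

noncomputable def discountedOccupancy (γ : ℝ) (f : ℕ → S) (s : S) : ℝ :=
  ∑' t : ℕ, γ ^ t * if f t = s then 1 else 0

lemma discounted_indicator_nonneg (hγ0 : 0 ≤ γ) (f : ℕ → S) (s : S) (t : ℕ) :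
    0 ≤ γ ^ t * if f t = s then (1 : ℝ) else 0 := by
  split_ifs <;> simp [pow_nonneg hγ0]

lemma discounted_indicator_le (hγ0 : 0 ≤ γ) (f : ℕ → S) (s : S) (t : ℕ) :
    γ ^ t * (if f t = s then (1 : ℝ) else 0) ≤ γ ^ t := by
  split_ifs <;> simp [pow_nonneg hγ0]

lemma summable_discounted_indicator (hγ0 : 0 ≤ γ) (hγ1 : γ < 1) (f : ℕ → S) (s : S) :
    Summable fun t : ℕ ↦ γ ^ t * if f t = s then (1 : ℝ) else 0 :=
  (summable_geometric_of_lt_one hγ0 hγ1).of_nonneg_of_le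
    (discounted_indicator_nonneg hγ0 f s) (discounted_indicator_le hγ0 f s)

lemma discountedOccupancy_nonneg (hγ0 : 0 ≤ γ) (f : ℕ → S) (s : S) :
    0 ≤ discountedOccupancy γ f s :=
  tsum_nonneg (discounted_indicator_nonneg hγ0 f s)

lemma sum_discountedOccupancy [Fintype S] (hγ0 : 0 ≤ γ) (hγ1 : γ < 1) (f : ℕ → S) :
    ∑ s, discountedOccupancy γ f s = (1 - γ)⁻¹ := by
  unfold discountedOccupancy
  rw [← Summable.tsum_finsetSum fun s _ ↦ summable_discounted_indicator hγ0 hγ1 f s,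
    ← tsum_geometric_of_lt_one hγ0 hγ1]
  congr 1 with t
  simp

variable [MeasurableSpace S] [MeasurableSingletonClass S]

lemma measurable_discountedOccupancy (hγ0 : 0 ≤ γ) (hγ1 : γ < 1) :
    Measurable (discountedOccupancy (S := S) γ) := by
  refine measurable_pi_lambda _ fun s ↦ ?_
  have hterm (t : ℕ) :
      Measurable fun f : ℕ → S ↦ γ ^ t * if f t = s then (1 : ℝ) else 0 :=
    (Measurable.ite (measurableSet_apply_eq measurable_id t s)
      measurable_const measurable_const).const_mul _
  refine measurable_of_tendsto_metrizable (fun n ↦ Finset.measurable_sum (Finset.range n)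
    fun t _ ↦ hterm t) (tendsto_pi_nhds.2 fun f ↦ ?_)
  exact (summable_discounted_indicator hγ0 hγ1 f s).hasSum.tendsto_sum_nat

lemma integral_discountedOccupancy {Ω : Type*} [MeasurableSpace Ω] {μ : Measure Ω}
    [IsFiniteMeasure μ] {X : Ω → ℕ → S} (hX : Measurable X) (hγ0 : 0 ≤ γ) (hγ1 : γ < 1)
    (s : S) :
    ∫ ω, discountedOccupancy γ (X ω) s ∂μ = ∑' t, γ ^ t * μ.real {ω | X ω t = s} := by
  have hterm (t : ℕ) : (fun ω ↦ γ ^ t * if X ω t = s then (1 : ℝ) else 0) =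
      {ω | X ω t = s}.indicator fun _ ↦ γ ^ t := by
    ext ω
    simp [Set.indicator_apply]
  have hint (t : ℕ) : Integrable (fun ω ↦ γ ^ t * if X ω t = s then (1 : ℝ) else 0) μ := by
    rw [hterm]
    exact (integrable_const _).indicator (measurableSet_apply_eq hX t s)
  have hsummable : Summable fun t ↦ ∫ ω, ‖γ ^ t * if X ω t = s then (1 : ℝ) else 0‖ ∂μ := by
    refine ((summable_geometric_of_lt_one hγ0 hγ1).mul_left (μ.real Set.univ)).of_nonneg_of_le
      (fun t ↦ integral_nonneg fun ω ↦ norm_nonneg _) fun t ↦ ?_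
    rw [← smul_eq_mul, ← integral_const]
    refine integral_mono (hint t).norm (integrable_const _) fun ω ↦ ?_
    rw [norm_of_nonneg (discounted_indicator_nonneg hγ0 _ s t)]
    exact discounted_indicator_le hγ0 _ s t
  unfold discountedOccupancy
  rw [← integral_tsum_of_summable_integral_norm hint hsummable]
  congr 1 with t
  rw [hterm, integral_indicator_const _ (measurableSet_apply_eq hX t s), smul_eq_mul, mul_comm]

end Occupancy

lemma sum_abs_eq_two_mul_sum_filter_nonneg {ι : Type*} (s : Finset ι) {x : ι → ℝ}
    (h : ∑ i ∈ s, x i = 0) : ∑ i ∈ s, |x i| = 2 * ∑ i ∈ s with 0 ≤ x i, x i := by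
  calc ∑ i ∈ s, |x i| = ∑ i ∈ s, (|x i| + x i) := by rw [Finset.sum_add_distrib, h, add_zero]
    _ = 2 * ∑ i ∈ s with 0 ≤ x i, x i := by
      rw [Finset.sum_filter, Finset.mul_sum]
      refine Finset.sum_congr rfl fun i _ ↦ ?_
      split_ifs with hi
      · rw [abs_of_nonneg hi]; ring
      · rw [abs_of_neg (not_le.1 hi)]; ring

section Concentration

variable {Ω ι : Type*} [MeasurableSpace Ω] {μ : Measure Ω} [IsProbabilityMeasure μ] [Fintype ι]

lemma measureReal_sum_mean_sub_ge_le_of_mem_Icc {X : ι → Ω → ℝ} (hX : ∀ i, Measurable (X i))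
    (hindep : iIndepFun X μ) {a b m : ℝ} (hbd : ∀ i ω, X i ω ∈ Set.Icc a b)
    (hmean : ∀ i, μ[X i] = m) {ε : ℝ} (hε : 0 ≤ ε) :
    μ.real {ω | ε ≤ ∑ i, (m - X i ω)} ≤
      exp (-2 * ε ^ 2 / (Fintype.card ι * (b - a) ^ 2)) := by
  have hsubG (i : ι) : HasSubgaussianMGF (fun ω ↦ m - X i ω) ((‖b - a‖₊ / 2) ^ 2) μ := by
    have := (hasSubgaussianMGF_of_mem_Icc (μ := μ) (hX i).aemeasurable (ae_of_all _ (hbd i))).neg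
    rw [hmean i] at this
    convert this using 1
    ext ω
    simp
  have hindep' : iIndepFun (fun i ω ↦ m - X i ω) μ :=
    hindep.comp (fun _ x ↦ m - x) fun _ ↦ measurable_const.sub measurable_id
  refine (HasSubgaussianMGF.measure_sum_ge_le_of_iIndepFun hindep' (s := Finset.univ)
    (fun i _ ↦ hsubG i) hε).trans_eq ?_
  push_cast
  simp only [Finset.sum_const, Finset.card_univ, nsmul_eq_mul, norm_eq_abs,
    div_pow, sq_abs]
  rw [show 2 * (Fintype.card ι * ((b - a) ^ 2 / 2 ^ 2)) = Fintype.card ι * (b - a) ^ 2 / 2 by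
    ring, div_div_eq_mul_div]
  ring_nf

lemma measureReal_lt_sum_abs_sub_empiricalMean_le [Nonempty ι] {S : Type*} [Fintype S]
    {Y : ι → Ω → S → ℝ} (hY : ∀ i, Measurable (Y i)) (hindep : iIndepFun Y μ) {c : ℝ}
    (hnonneg : ∀ i ω s, 0 ≤ Y i ω s) (htotal : ∀ i ω, ∑ s, Y i ω s = c) {p : S → ℝ}
    (hmean : ∀ i s, μ[fun ω ↦ Y i ω s] = p s) {ε : ℝ} (hε : 0 ≤ ε) :
    μ.real {ω | ε < ∑ s, |p s - (Fintype.card ι : ℝ)⁻¹ * ∑ i, Y i ω s|} ≤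
      2 ^ Fintype.card S * exp (-(Fintype.card ι * ε ^ 2) / (2 * c ^ 2)) := by
  set n : ℝ := (Fintype.card ι : ℝ)
  have hn : 0 < n := Nat.cast_pos.2 Fintype.card_pos
  have hbd (A : Finset S) (i : ι) (ω : Ω) : ∑ s ∈ A, Y i ω s ∈ Set.Icc 0 c :=
    ⟨Finset.sum_nonneg fun s _ ↦ hnonneg i ω s, htotal i ω ▸
      Finset.sum_le_sum_of_subset_of_nonneg A.subset_univ fun s _ _ ↦ hnonneg i ω s⟩
  have hmeasurable (A : Finset S) (i : ι) : Measurable fun ω ↦ ∑ s ∈ A, Y i ω s :=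
    Finset.measurable_sum A fun s _ ↦ (measurable_pi_apply s).comp (hY i)
  have hmean_sum (A : Finset S) (i : ι) : μ[fun ω ↦ ∑ s ∈ A, Y i ω s] = ∑ s ∈ A, p s := by
    rw [integral_finsetSum (f := fun s ω ↦ Y i ω s) A fun s _ ↦ Integrable.of_mem_Icc 0 c
      ((measurable_pi_apply s).comp (hY i)).aemeasurable (ae_of_all _ fun ω ↦ by
        simpa using hbd {s} i ω)]
    exact Finset.sum_congr rfl fun s _ ↦ hmean i s
  have hp_total : ∑ s, p s = c := by
    have := hmean_sum Finset.univ (Classical.arbitrary ι)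
    simp only [htotal, integral_const, probReal_univ, one_smul] at this
    exact this.symm
  have hsum_eq (A : Finset S) (ω : Ω) : ∑ i, (∑ s ∈ A, p s - ∑ s ∈ A, Y i ω s) =
      n * ∑ s ∈ A, (p s - n⁻¹ * ∑ i, Y i ω s) := by
    simp only [Finset.sum_sub_distrib, Finset.sum_const, Finset.card_univ, nsmul_eq_mul,
      mul_sub, ← Finset.mul_sum, mul_inv_cancel_left₀ hn.ne', Finset.sum_comm (s := A)]
    rfl
  let E (A : Finset S) := {ω | n * (ε / 2) ≤ ∑ i, (∑ s ∈ A, p s - ∑ s ∈ A, Y i ω s)}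
  have hE (A : Finset S) : μ.real (E A) ≤ exp (-(n * ε ^ 2) / (2 * c ^ 2)) := by
    refine (measureReal_sum_mean_sub_ge_le_of_mem_Icc (hmeasurable A) ?_ (hbd A)
      (hmean_sum A) (by positivity)).trans_eq ?_
    · exact hindep.comp (fun _ y ↦ ∑ s ∈ A, y s) fun _ ↦
        Finset.measurable_sum A fun s _ ↦ measurable_pi_apply s
    · rw [sub_zero, show -2 * (n * (ε / 2)) ^ 2 = n * (-(n * ε ^ 2) / 2) by ring,
        mul_div_mul_left _ _ hn.ne', div_div]
  have hcover : {ω | ε < ∑ s, |p s - n⁻¹ * ∑ i, Y i ω s|} ⊆ ⋃ A, E A := by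
    intro ω hω
    have hzero : ∑ s, (p s - n⁻¹ * ∑ i, Y i ω s) = 0 := by
      have := hsum_eq Finset.univ ω
      simp only [hp_total, htotal, sub_self, Finset.sum_const_zero] at this
      exact (mul_eq_zero.1 this.symm).resolve_left hn.ne'
    rw [Set.mem_ofPred_eq, sum_abs_eq_two_mul_sum_filter_nonneg _ hzero] at hω
    refine Set.mem_iUnion.2 ⟨({s | 0 ≤ p s - n⁻¹ * ∑ i, Y i ω s} : Finset S), ?_⟩
    rw [Set.mem_ofPred_eq, hsum_eq]
    exact mul_le_mul_of_nonneg_left (by linarith) hn.le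
  calc μ.real {ω | ε < ∑ s, |p s - n⁻¹ * ∑ i, Y i ω s|} ≤ ∑ A, μ.real (E A) :=
        (measureReal_mono hcover).trans (measureReal_iUnion_fintype_le E)
    _ ≤ ∑ _A : Finset S, exp (-(n * ε ^ 2) / (2 * c ^ 2)) := Finset.sum_le_sum fun A _ ↦ hE A
    _ = 2 ^ Fintype.card S * exp (-(n * ε ^ 2) / (2 * c ^ 2)) := by simp

end Concentration

lemma ofReal_one_sub_le_of_measureReal_compl_le {Ω : Type*} [MeasurableSpace Ω] {μ : Measure Ω}
    [IsProbabilityMeasure μ] {s : Set Ω} {δ : ℝ} (h : μ.real sᶜ ≤ δ) :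
    ENNReal.ofReal (1 - δ) ≤ μ s := by
  refine ENNReal.ofReal_le_of_le_toReal ?_
  have := measureReal_union_le (μ := μ) s sᶜ
  rw [Set.union_compl_self, probReal_univ] at this
  rw [← measureReal_def]
  linarith

lemma two_pow_mul_exp_neg_le (K : ℕ) {δ : ℝ} (hδ : 0 < δ) :
    2 ^ K * exp (-(3 * K + 4 * log (1 / δ)) / 4) ≤ δ := by
  have h2 : (2 : ℝ) ≤ exp (3 / 4) :=
    (log_le_iff_le_exp two_pos).1 (by linarith [log_two_lt_d9])
  calc 2 ^ K * exp (-(3 * K + 4 * log (1 / δ)) / 4)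
      = 2 ^ K * exp (-(3 / 4 * K)) * exp (log δ) := by
        rw [mul_assoc, ← exp_add, one_div, log_inv]
        ring_nf
    _ = 2 ^ K * exp (-(3 / 4 * K)) * δ := by rw [exp_log hδ]
    _ ≤ exp (3 / 4) ^ K * exp (-(3 / 4 * K)) * δ := by gcongr
    _ = δ := by rw [← exp_nat_mul, ← exp_add, mul_comm (K : ℝ), add_neg_cancel, exp_zero, one_mul]

theorem discounted_occupancy_high_probability_bound_general
    {S : Type*} [Fintype S] [DecidableEq S] [MeasurableSpace S]
    [MeasurableSingletonClass S]
    {Ω : Type*} [MeasurableSpace Ω] (μ : Measure Ω) [IsProbabilityMeasure μ]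
    (γ : ℝ) (hγ0 : 0 ≤ γ) (hγ1 : γ < 1)
    (N : ℕ) (hN : 0 < N)
    (δ' : ℝ) (hδ0 : 0 < δ') (hδ1 : δ' < 1)
    (T : Fin N → Ω → (ℕ → S))
    (hmeas : ∀ i, Measurable (T i))
    (hindep : iIndepFun T μ)
    (hident : ∀ i, μ.map (T i) = μ.map (T ⟨0, hN⟩))
    (dD : S → Ω → ℝ)
    (hdD : ∀ s ω, dD s ω =
      (1 / (N : ℝ)) * ∑ i : Fin N, ∑' t : ℕ, γ ^ t * (if T i ω t = s then (1 : ℝ) else 0))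
    (d : S → ℝ)
    (hd : ∀ s, d s = ∑' t : ℕ, γ ^ t * (μ {ω | T ⟨0, hN⟩ ω t = s}).toReal) :
    ENNReal.ofReal (1 - δ') ≤
      μ {ω | ∑ s : S, |d s - dD s ω| ≤
        (1 / (1 - γ)) *
          Real.sqrt ((3 * (Fintype.card S : ℝ) + 4 * Real.log (1 / δ')) / (2 * (N : ℝ)))} := by
  have : Nonempty (Fin N) := ⟨⟨0, hN⟩⟩
  have hocc := measurable_discountedOccupancy (S := S) hγ0 hγ1
  have hmean (i : Fin N) (s : S) : μ[fun ω ↦ discountedOccupancy γ (T i ω) s] = d s := by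
    have hlaw : IdentDistrib (T i) (T ⟨0, hN⟩) μ μ :=
      ⟨(hmeas i).aemeasurable, (hmeas _).aemeasurable, hident i⟩
    refine (hlaw.comp ((measurable_pi_apply s).comp hocc)).integral_eq.trans ?_
    exact (integral_discountedOccupancy (hmeas _) hγ0 hγ1 s).trans (hd s).symm
  have hlog : 0 ≤ log (1 / δ') := log_nonneg (by rw [le_div_iff₀ hδ0]; linarith)
  set ε := (1 / (1 - γ)) *
    Real.sqrt ((3 * (Fintype.card S : ℝ) + 4 * Real.log (1 / δ')) / (2 * (N : ℝ)))
  have hexponent : (N : ℝ) * ε ^ 2 / (2 * (1 - γ)⁻¹ ^ 2) =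
      (3 * Fintype.card S + 4 * log (1 / δ')) / 4 := by
    have : 1 - γ ≠ 0 := (sub_pos.2 hγ1).ne'
    rw [mul_pow, sq_sqrt (by positivity)]
    field_simp
    ring
  apply ofReal_one_sub_le_of_measureReal_compl_le
  calc μ.real {ω | ∑ s, |d s - dD s ω| ≤ ε}ᶜ
      = μ.real {ω | ε < ∑ s, |d s - (Fintype.card (Fin N) : ℝ)⁻¹ *
          ∑ i, discountedOccupancy γ (T i ω) s|} := by
        simp only [Set.compl_ofPred, not_le, hdD, Fintype.card_fin, one_div]
        rfl
    _ ≤ 2 ^ Fintype.card S * exp (-(N * ε ^ 2) / (2 * (1 - γ)⁻¹ ^ 2)) := by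
        simpa using measureReal_lt_sum_abs_sub_empiricalMean_le
          (fun i ↦ hocc.comp (hmeas i)) (hindep.comp _ fun _ ↦ hocc)
          (fun i ω ↦ discountedOccupancy_nonneg hγ0 (T i ω))
          (fun i ω ↦ sum_discountedOccupancy hγ0 hγ1 (T i ω)) hmean (by positivity)
    _ ≤ δ' := by
        rw [neg_div, hexponent, ← neg_div]
        exact two_pow_mul_exp_neg_le _ hδ0

/-- High-probability form of the concentration lemma: with probability at
least `1 - δ'`, the L1 deviation between the expected and empirical discounted occupancies
is at most `(1/(1-γ))·√((3K + 4·log(1/δ'))/(2N))`. -/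
theorem discounted_occupancy_high_probability_bound
    {S : Type*} [Fintype S] [Nonempty S] [DecidableEq S] [MeasurableSpace S]
    [MeasurableSingletonClass S]
    {Ω : Type*} [MeasurableSpace Ω] (μ : Measure Ω) [IsProbabilityMeasure μ]
    (γ : ℝ) (hγ0 : 0 ≤ γ) (hγ1 : γ < 1)
    (N : ℕ) (hN : 0 < N)
    (δ' : ℝ) (hδ0 : 0 < δ') (hδ1 : δ' < 1)
    (T : Fin N → Ω → (ℕ → S))
    (hmeas : ∀ i, Measurable (T i))
    (hindep : iIndepFun T μ)
    (hident : ∀ i, μ.map (T i) = μ.map (T ⟨0, hN⟩))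
    (dD : S → Ω → ℝ)
    (hdD : ∀ s ω, dD s ω =
      (1 / (N : ℝ)) * ∑ i : Fin N, ∑' t : ℕ, γ ^ t * (if T i ω t = s then (1 : ℝ) else 0))
    (d : S → ℝ)
    (hd : ∀ s, d s = ∑' t : ℕ, γ ^ t * (μ {ω | T ⟨0, hN⟩ ω t = s}).toReal) :
    ENNReal.ofReal (1 - δ') ≤
      μ {ω | ∑ s : S, |d s - dD s ω| ≤
        (1 / (1 - γ)) *
          Real.sqrt ((3 * (Fintype.card S : ℝ) + 4 * Real.log (1 / δ')) / (2 * (N : ℝ)))} :=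
  discounted_occupancy_high_probability_bound_general μ γ hγ0 hγ1 N hN δ' hδ0 hδ1 T hmeas hindep
    hident dD hdD d hd
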